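/- arXiv:1712.04191 — 9 statements merged into one kernel-verified Lean document; each statement's English description precedes it below -/
import Mathlib

section
/- If □ : {0,1}^W → {0,1}^W is surjective, then for every w ∈ W there exists y ∈ W such that (w,y) ∈ E and for no z ≠ w does (z,y) ∈ E hold. -/
/-- If □ is surjective, then for every w there is y with w E y
and no z ≠ w has z E y. -/
theorem exists_private_succ_of_box_surjective {W : Type*} (E : W → W → Prop)
    (N : W → Finset W) (hN : ∀ w w', w' ∈ N w ↔ E w w')
    (hsurj : Function.Surjective (fun (a : W → Bool) (w : W) => (N w).inf a)) :
    ∀ w, ∃ y, E w y ∧ ∀ z, z ≠ w → ¬ E z y := by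
  intro w
  classical
  obtain ⟨a, ha⟩ := hsurj (fun v => decide (v ≠ w))
  have haw : (N w).inf a = false := by
    have := congrFun ha w
    simpa using this
  have key : ∃ y ∈ N w, a y = false := by
    by_contra h
    push_neg at h
    have : (N w).inf a = ⊤ := (Finset.inf_eq_top_iff a (N w)).mpr (fun b hb => by
      have := h b hb
      simpa using this)
    rw [haw] at this
    exact Bool.false_ne_true this
  obtain ⟨y, hy, hay⟩ := key
  refine ⟨y, (hN w y).mp hy, ?_⟩
  intro z hz hEz
  have hz' : (N z).inf a = true := by
    have := congrFun ha z
    simpa [hz] using this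
  have hyz : y ∈ N z := (hN z y).mpr hEz
  have : a y = true := (Finset.inf_eq_top_iff a (N z)).mp hz' y hyz
  rw [hay] at this
  exact Bool.false_ne_true this
end

section
/- If □ : {0,1}^W → {0,1}^W is injective, then for every w ∈ W there exists y ∈ W such that (y,w) ∈ E and for no z ≠ w does (y,z) ∈ E hold. -/
/-- If □ is injective, then for every w there is y with y E w
and no z ≠ w has y E z. -/
theorem exists_private_pred_of_box_injective {W : Type*} (E : W → W → Prop)
    (N : W → Finset W) (hN : ∀ w w', w' ∈ N w ↔ E w w')
    (hinj : Function.Injective (fun (a : W → Bool) (w : W) => (N w).inf a)) :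
    ∀ w, ∃ y, E y w ∧ ∀ z, z ≠ w → ¬ E y z := by
  classical
  intro w
  by_contra h
  push_neg at h
  -- a = indicator of {w}, b = constant false
  set a : W → Bool := fun v => if v = w then true else false with ha
  set b : W → Bool := fun _ => false with hb
  have key : (fun (a : W → Bool) (w : W) => (N w).inf a) a
      = (fun (a : W → Bool) (w : W) => (N w).inf a) b := by
    funext y
    simp only
    by_cases hemp : N y = ∅
    · simp [hemp]
    · obtain ⟨v, hv⟩ := Finset.nonempty_iff_ne_empty.2 hemp
      -- right side: inf of constant false over nonempty set is false
      have hr : (N y).inf b = false := by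
        have hle := Finset.inf_le (f := b) hv
        exact le_antisymm (by simpa [hb] using hle) (by simp)
      rw [hr]
      -- left side: there is some v' in N y with v' ≠ w, unless N y ⊆ {w}
      by_cases hsub : ∀ v' ∈ N y, v' = w
      · -- then w ∈ N y, so E y w, so by h there is z ≠ w with E y z, contradiction
        have hw : w ∈ N y := (hsub v hv) ▸ hv
        obtain ⟨z, hz, hEz⟩ := h y ((hN y w).1 hw)
        exact absurd (hsub z ((hN y z).2 hEz)) hz
      · push_neg at hsub
        obtain ⟨v', hv', hvw⟩ := hsub
        have : a v' = false := by simp [ha, hvw]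
        have hle := Finset.inf_le (f := a) hv'
        rw [this] at hle
        exact le_antisymm (by simpa using hle) (by simp)
  have := hinj key
  have : a w = b w := congrFun this w
  simp [ha, hb] at this
end

section
/- The modal operator □ : {0,1}^W → {0,1}^W is a bijection if and only if every world of W has exactly one E-successor and exactly one E-predecessor. -/
/-- □ is a bijection of {0,1}^W iff every world has exactly one
E-successor and exactly one E-predecessor (equivalently, the frame decomposes
into a disjoint union of cycles and lines). -/
theorem box_bijective_iff {W : Type*} (E : W → W → Prop)
    (N : W → Finset W) (hN : ∀ w w', w' ∈ N w ↔ E w w') :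
    Function.Bijective (fun (a : W → Bool) (w : W) => (N w).inf a) ↔
      ((∀ w, ∃! w', E w w') ∧ (∀ w, ∃! w', E w' w)) := by
  classical
  set box : (W → Bool) → (W → Bool) := fun a w => (N w).inf a with hbox
  constructor
  · rintro ⟨hinj, hsurj⟩
    -- box preserves meets
    have hmeet : ∀ a b : W → Bool, box (a ⊓ b) = box a ⊓ box b := by
      intro a b
      funext w
      exact Finset.inf_inf
    have hmono : ∀ a b : W → Bool, a ≤ b → box a ≤ box b := by
      intro a b h w
      exact Finset.inf_mono_fun (fun x _ => h x)
    -- inverse monotone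
    have hrev : ∀ a b : W → Bool, box a ≤ box b → a ≤ b := by
      intro a b h
      have h1 : box (a ⊓ b) = box a := by
        rw [hmeet]; exact inf_eq_left.mpr h
      have h2 : a ⊓ b = a := hinj h1
      exact inf_eq_left.mp h2
    -- box ⊤ = ⊤
    have htop : box ⊤ = ⊤ := by
      funext w
      exact le_antisymm le_top (Finset.le_inf fun _ _ => le_top)
    -- each N w is nonempty
    have hne : ∀ w, (N w).Nonempty := by
      intro w
      obtain ⟨a, ha⟩ := hsurj (fun _ => false)
      by_contra h
      rw [Finset.not_nonempty_iff_eq_empty] at h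
      have := congrFun ha w
      simp only [hbox, h, Finset.inf_empty] at this
      exact absurd this (by simp)
    -- each N w has at most one element
    have huniq : ∀ w, ∀ u ∈ N w, ∀ v ∈ N w, u = v := by
      intro w u hu v hv
      by_contra hne'
      set a : W → Bool := fun x => decide (x ≠ u) with hadef
      set b : W → Bool := fun x => decide (x ≠ v) with hbdef
      have hab : a ⊔ b = ⊤ := by
        funext x
        by_cases hxu : x = u
        · subst hxu
          simpa [hadef, hbdef] using hne'
        · simp [hadef, hbdef, hxu]
      -- box (a ⊔ b) ≤ box a ⊔ box b
      obtain ⟨c, hc⟩ := hsurj (box a ⊔ box b)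
      have hac : a ≤ c := hrev a c (by rw [hc]; exact le_sup_left)
      have hbc : b ≤ c := hrev b c (by rw [hc]; exact le_sup_right)
      have habc : box (a ⊔ b) ≤ box a ⊔ box b := by
        rw [← hc]; exact hmono _ _ (sup_le hac hbc)
      have h1 : box (a ⊔ b) w = true := by rw [hab, htop]; rfl
      have h2 : box a w = false := by
        have h : box a w ≤ a u := Finset.inf_le hu
        exact le_antisymm (by simpa [hadef] using h) (Bool.false_le _)
      have h3 : box b w = false := by
        have h : box b w ≤ b v := Finset.inf_le hv
        exact le_antisymm (by simpa [hbdef] using h) (Bool.false_le _)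
      have := habc w
      rw [h1] at this
      simp only [Pi.sup_apply, h2, h3] at this
      exact absurd this (by simp)
    have hsucc : ∀ w, ∃! w', E w w' := by
      intro w
      obtain ⟨u, hu⟩ := hne w
      exact ⟨u, (hN w u).mp hu, fun v hv => huniq w v ((hN w v).mpr hv) u hu⟩
    refine ⟨hsucc, ?_⟩
    -- define f
    set f : W → W := fun w => (hsucc w).choose with hfdef
    have hf : ∀ w, N w = {f w} := by
      intro w
      apply Finset.eq_singleton_iff_unique_mem.mpr
      refine ⟨(hN w _).mpr (hsucc w).choose_spec.1, fun x hx => ?_⟩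
      exact (hsucc w).choose_spec.2 x ((hN w x).mp hx)
    have hboxf : ∀ a w, box a w = a (f w) := by
      intro a w
      simp [hbox, hf w]
    intro w0
    -- existence of predecessor: f surjective
    have hex : ∃ w, f w = w0 := by
      by_contra h
      push_neg at h
      have : box (fun _ => true) = box (fun x => decide (x ≠ w0)) := by
        funext w
        rw [hboxf, hboxf]
        simp [h w]
      have := hinj this
      have := congrFun this w0
      simp at this
    obtain ⟨w1, hw1⟩ := hex
    refine ⟨w1, ?_, ?_⟩
    · rw [← hw1]; exact (hN w1 _).mp (by rw [hf]; exact Finset.mem_singleton_self _)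
    · intro w2 hw2
      -- f w2 = w0 = f w1 ; show w2 = w1
      have hw2' : f w2 = w0 := ((hsucc w2).choose_spec.2 w0 hw2).symm ▸ rfl
      have hfw2 : f w2 = w0 := by
        have h1 : E w2 (f w2) := (hsucc w2).choose_spec.1
        have := (hsucc w2).unique h1 hw2
        exact this
      by_contra hne'
      obtain ⟨a, ha⟩ := hsurj (fun x => decide (x = w1))
      have h1 := congrFun ha w1
      have h2 := congrFun ha w2
      rw [hboxf] at h1 h2
      rw [hfw2, ← hw1] at h2
      rw [h2] at h1
      simp at h1
      exact hne' h1
  · rintro ⟨h1, h2⟩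
    set f : W → W := fun w => (h1 w).choose with hfdef
    have hfE : ∀ w, E w (f w) := fun w => (h1 w).choose_spec.1
    have hf : ∀ w, N w = {f w} := by
      intro w
      apply Finset.eq_singleton_iff_unique_mem.mpr
      exact ⟨(hN w _).mpr (hfE w), fun x hx => (h1 w).choose_spec.2 x ((hN w x).mp hx)⟩
    have hboxf : ∀ (a : W → Bool) w, box a w = a (f w) := by
      intro a w
      simp [hbox, hf w]
    have hfbij : Function.Bijective f := by
      constructor
      · intro w1 w2 h
        exact ((h2 (f w1)).unique (hfE w1) (h ▸ hfE w2))
      · intro w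
        obtain ⟨w', hw', _⟩ := h2 w
        exact ⟨w', (h1 w').unique (hfE w') hw'⟩
    constructor
    · intro a b hab
      funext x
      obtain ⟨w, hw⟩ := hfbij.2 x
      have := congrFun hab w
      rw [hboxf, hboxf, hw] at this
      exact this
    · intro b
      let e := Equiv.ofBijective f hfbij
      refine ⟨fun x => b (e.symm x), ?_⟩
      funext w
      rw [hboxf]
      show b (e.symm (e w)) = b w
      rw [Equiv.symm_apply_apply]
end

section
/- If every function b ∈ {0,1}^W taking value 0 at exactly one point is in the range of □, then □ : {0,1}^W → {0,1}^W is surjective. -/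
lemma bool_finset_inf_eq_true {W : Type*} (s : Finset W) (f : W → Bool) :
    s.inf f = true ↔ ∀ x ∈ s, f x = true := by
  have : (⊤ : Bool) = true := rfl
  rw [← this, Finset.inf_eq_top_iff]

/-- If every b ∈ {0,1}^W taking value 0 at exactly one point is
in the range of □, then □ is surjective. -/
theorem box_surjective_of_single_zeroes {W : Type*} (E : W → W → Prop)
    (N : W → Finset W) (hN : ∀ w w', w' ∈ N w ↔ E w w')
    (h : ∀ b : W → Bool, (∃! w, b w = false) →
      ∃ a : W → Bool, (fun w => (N w).inf a) = b) :
    Function.Surjective (fun (a : W → Bool) (w : W) => (N w).inf a) := by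
  classical
  intro b
  set s : W → (W → Bool) := fun w0 w => decide (w ≠ w0) with hs
  have hsing : ∀ w0, ∃! w, s w0 w = false := by
    intro w0
    refine ⟨w0, by simp [s], ?_⟩
    intro y hy
    simpa [s] using hy
  choose A hA using fun w0 => h (s w0) (hsing w0)
  have key : ∀ w0 w, (N w).inf (A w0) = s w0 w := fun w0 w => congrFun (hA w0) w
  refine ⟨fun w' => decide (∀ w0, b w0 = false → A w0 w' = true), ?_⟩
  funext w
  simp only
  by_cases hb : b w = true
  · rw [hb, bool_finset_inf_eq_true]
    intro x hx
    simp only [decide_eq_true_eq]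
    intro w0 hw0
    have hne : w ≠ w0 := by rintro rfl; rw [hb] at hw0; exact absurd hw0 (by simp)
    have := key w0 w
    rw [show s w0 w = true by simp [s, hne]] at this
    exact (bool_finset_inf_eq_true _ _).mp this x hx
  · have hbf : b w = false := by simpa using hb
    rw [hbf]
    have h1 : (N w).inf (A w) = false := by
      rw [key w w]; simp [s]
    have h2 : ¬ ∀ x ∈ N w, A w x = true := by
      rw [← bool_finset_inf_eq_true, h1]; simp
    push_neg at h2
    obtain ⟨x, hx, hax⟩ := h2
    have : ¬ ((N w).inf (fun w' => decide (∀ w0, b w0 = false → A w0 w' = true)) = true) := by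
      rw [bool_finset_inf_eq_true]
      intro hall
      have := hall x hx
      simp only [decide_eq_true_eq] at this
      exact hax (this w hbf)
    simpa using this
end

section
/- If □a ≠ □a' whenever a, a' ∈ {0,1}^W differ at exactly one point, then □ : {0,1}^W → {0,1}^W is injective. -/
private lemma box_key {W : Type*} (N : W → Finset W)
    (h : ∀ a a' : W → Bool, (∃! w, a w ≠ a' w) →
      (fun w => (N w).inf a) ≠ (fun w => (N w).inf a'))
    (a a' : W → Bool)
    (hEq : (fun w => (N w).inf a) = (fun w => (N w).inf a'))
    (w : W) (ht : a w = true) (hf : a' w = false) : False := by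
  classical
  set d : W → Bool := Function.update a w false with hd
  have hdiff : ∃! u, a u ≠ d u := by
    refine ⟨w, ?_, ?_⟩
    · simp [hd, ht]
    · intro u hu
      by_contra hne
      simp [hd, Function.update_of_ne hne] at hu
  have hbox := h a d hdiff
  obtain ⟨v, hv⟩ : ∃ v, (N v).inf a ≠ (N v).inf d := by
    by_contra hc
    push_neg at hc
    exact hbox (funext hc)
  have hwv : w ∈ N v := by
    by_contra hw
    apply hv
    apply Finset.inf_congr rfl
    intro u hu
    have hne : u ≠ w := fun huw => hw (huw ▸ hu)
    exact (Function.update_of_ne hne false a).symm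
  have hdw : d w = false := by simp [hd]
  have hdinf : (N v).inf d = false := by
    have h1 : (N v).inf d ≤ d w := Finset.inf_le hwv
    rw [hdw] at h1
    revert h1; cases (N v).inf d <;> simp
  have hainf : (N v).inf a = true := by
    cases hh : (N v).inf a with
    | false => exact absurd (hh.trans hdinf.symm) hv
    | true => rfl
  have ha'inf : (N v).inf a' = false := by
    have h1 : (N v).inf a' ≤ a' w := Finset.inf_le hwv
    rw [hf] at h1
    revert h1; cases (N v).inf a' <;> simp
  have := congrFun hEq v
  simp only [hainf, ha'inf] at this
  exact absurd this (by simp)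

/-- If □a ≠ □a' whenever a, a' differ at exactly one point,
then □ is injective. -/
theorem box_injective_of_single_differences {W : Type*} (E : W → W → Prop)
    (N : W → Finset W) (hN : ∀ w w', w' ∈ N w ↔ E w w')
    (h : ∀ a a' : W → Bool, (∃! w, a w ≠ a' w) →
      (fun w => (N w).inf a) ≠ (fun w => (N w).inf a')) :
    Function.Injective (fun (a : W → Bool) (w : W) => (N w).inf a) := by
  intro a a' hEq
  simp only at hEq
  funext w
  by_contra hw
  rcases Bool.eq_false_or_eq_true (a w) with ha | ha
  · have ha' : a' w = false := by
      cases hb : a' w with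
      | false => rfl
      | true => exact absurd (ha.trans hb.symm ▸ rfl : a w = a' w) hw
    exact box_key N h a a' hEq w ha ha'
  · have ha' : a' w = true := by
      cases hb : a' w with
      | false => exact absurd (ha.trans hb.symm ▸ rfl : a w = a' w) hw
      | true => rfl
    exact box_key N h a' a hEq.symm w ha' ha
end

section
/- For a finite Kripke frame, the following are equivalent: (1) every b ∈ {0,1}^W taking value 0 at exactly one point lies in the range of □; (2) □a ≠ □a' whenever a, a' differ at exactly one point; (3) □ is a bijection. -/
private lemma inf_true_iff {W : Type*} (s : Finset W) (a : W → Bool) :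
    s.inf a = true ↔ ∀ v ∈ s, a v = true := by
  rw [show (true : Bool) = ⊤ from rfl, Finset.inf_eq_top_iff]

private lemma box_mono {W : Type*} (s : Finset W) (a a' : W → Bool)
    (h : ∀ v, a v ≤ a' v) : s.inf a ≤ s.inf a' :=
  Finset.inf_mono_fun (fun v _ => h v)

/-- Key step for (2) ⇒ injective: from `c ≤ a`, `c ≠ a`, `□c = □a`, produce a
one-point flip `d` of `c` with `□d = □c`. -/
private lemma flip_step {W : Type*} (N : W → Finset W) (c a : W → Bool)
    (hle : ∀ v, c v ≤ a v) (hne : c ≠ a)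
    (hbox : (fun w => (N w).inf c) = (fun w => (N w).inf a)) :
    ∃ d : W → Bool, (∃! w, c w ≠ d w) ∧
      (fun w => (N w).inf c) = (fun w => (N w).inf d) := by
  classical
  obtain ⟨v, hv⟩ : ∃ v, c v ≠ a v := Function.ne_iff.mp hne
  have hcv : c v = false := by
    cases hcv : c v with
    | false => rfl
    | true =>
      exfalso
      apply hv
      rw [hcv]
      exact le_antisymm (hcv ▸ hle v) (Bool.le_true _)
  have hav : a v = true := by
    cases hav : a v with
    | false => exact absurd (hcv.trans hav.symm) hv
    | true => rfl
  refine ⟨Function.update c v true, ⟨v, ?_, ?_⟩, ?_⟩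
  · simp [hcv]
  · intro u hu
    by_contra hne'
    exact hu (by simp [Function.update_of_ne hne'])
  · funext w
    have h1 : (N w).inf c ≤ (N w).inf (Function.update c v true) := by
      apply box_mono
      intro u
      rcases eq_or_ne u v with rfl | hu
      · simp [hcv]
      · simp [Function.update_of_ne hu]
    have h2 : (N w).inf (Function.update c v true) ≤ (N w).inf a := by
      apply box_mono
      intro u
      rcases eq_or_ne u v with rfl | hu
      · simp [hav]
      · simpa [Function.update_of_ne hu] using hle u
    exact le_antisymm h1 (by rw [congrFun hbox w]; exact h2)

/-- For a finite Kripke frame the following are equivalent: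
(1) every b with exactly one zero is in the range of □;
(2) □a ≠ □a' whenever a, a' differ at exactly one point;
(3) □ is a bijection. -/
theorem box_bijective_tfae {W : Type*} [Fintype W] [Nonempty W]
    (E : W → W → Prop) (N : W → Finset W) (hN : ∀ w w', w' ∈ N w ↔ E w w') :
    ((∀ b : W → Bool, (∃! w, b w = false) →
        ∃ a : W → Bool, (fun w => (N w).inf a) = b) ↔
      Function.Bijective (fun (a : W → Bool) (w : W) => (N w).inf a)) ∧
    ((∀ a a' : W → Bool, (∃! w, a w ≠ a' w) →
        (fun w => (N w).inf a) ≠ (fun w => (N w).inf a')) ↔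
      Function.Bijective (fun (a : W → Bool) (w : W) => (N w).inf a)) := by
  constructor
  · constructor
    · -- (1) → bijective
      intro h
      rw [← Finite.surjective_iff_bijective]
      intro b
      classical
      set S : Finset W := Finset.univ.filter (fun w => b w = false) with hS
      have hmem : ∀ w, w ∈ S ↔ b w = false := by
        intro w; simp [hS]
      have hexu : ∀ w : W, ∃! w', (fun v => (decide (v ≠ w))) w' = false := by
        intro w
        refine ⟨w, by simp, fun u hu => by simpa using hu⟩
      set g : W → (W → Bool) := fun w => Classical.choose (h _ (hexu w)) with hg
      have hgspec : ∀ w v, (N v).inf (g w) = decide (v ≠ w) :=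
        fun w v => congrFun (Classical.choose_spec (h _ (hexu w))) v
      refine ⟨fun v => S.inf (fun w => g w v), ?_⟩
      funext v
      show (N v).inf (fun u => S.inf (fun w => g w u)) = b v
      rw [Bool.eq_iff_iff, inf_true_iff]
      constructor
      · intro hall
        by_contra hb
        have hbv : b v = false := by simpa using hb
        have hvS : v ∈ S := (hmem v).mpr hbv
        have : (N v).inf (g v) = true := by
          rw [inf_true_iff]
          intro u hu
          have := hall u hu
          rw [inf_true_iff] at this
          exact this v hvS
        rw [hgspec v v] at this
        simp at this
      · intro hb u hu
        rw [inf_true_iff]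
        intro w hw
        have hne : v ≠ w := by
          intro hvw
          have hbw := (hmem w).mp hw
          rw [← hvw] at hbw
          simp [hbw] at hb
        have h1 : (N v).inf (g w) = true := by
          rw [hgspec w v]; simpa using hne
        rw [inf_true_iff] at h1
        exact h1 u hu
    · -- bijective → (1)
      intro h b _
      exact h.surjective b
  · constructor
    · -- (2) → bijective
      intro h
      rw [← Finite.injective_iff_bijective]
      intro a a' heq0
      have heq : (fun w => (N w).inf a) = (fun w => (N w).inf a') := heq0
      by_contra hne
      classical
      set c : W → Bool := fun v => a v && a' v with hc
      have hca : ∀ v, c v ≤ a v := fun v => Bool.and_le_left _ _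
      have hca' : ∀ v, c v ≤ a' v := fun v => Bool.and_le_right _ _
      have hboxc : (fun w => (N w).inf c) = (fun w => (N w).inf a) := by
        funext w
        have h1 : (N w).inf c ≤ (N w).inf a := box_mono _ _ _ hca
        have h2 : (N w).inf a ≤ (N w).inf c := by
          rw [Bool.le_iff_imp]
          intro ha
          have ha' : (N w).inf a' = true := by rw [← congrFun heq w]; exact ha
          rw [inf_true_iff] at ha ha' ⊢
          intro u hu
          simp [hc, ha u hu, ha' u hu]
        exact le_antisymm h1 h2
      have hboxc' : (fun w => (N w).inf c) = (fun w => (N w).inf a') := by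
        rw [hboxc]; exact heq
      rcases eq_or_ne c a with hceq | hcne
      · have hcne' : c ≠ a' := fun hk => hne (hceq ▸ hk ▸ rfl)
        obtain ⟨d, hd, hbd⟩ := flip_step N c a' hca' hcne' hboxc'
        exact h c d hd hbd
      · obtain ⟨d, hd, hbd⟩ := flip_step N c a hca hcne hboxc
        exact h c d hd hbd
    · -- bijective → (2)
      intro h a a' hex
      obtain ⟨w, hw, -⟩ := hex
      intro heq
      have : a = a' := h.injective heq
      exact hw (by rw [this])
end

section
/- Let I be an ideal in ℂ[z_1, ..., z_K] such that z_i^2 − z_i ∈ I for every i ∈ {1, ..., K}. Then I is a radical ideal. -/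
/-!
If `e₁, …, e_K` are commuting idempotents, the products `∏ (eᵢ or 1 - eᵢ)` over the `2^K` choices
are idempotents summing to `1`, and multiplying `f(e)` by the one indexed by a vertex `v` of the
cube `{0,1}^K` gives `f(v)` times it. Hence if `f(e)ⁿ = 0` then `f(v)ⁿ = 0` or the idempotent of `v`
vanishes, so every summand of `f(e) = ∑ f(e) · (idempotent of v)` is zero. Applied to the images
of the `Xᵢ` in `k[X] ⧸ I`, this shows that the quotient is reduced.
-/

open MvPolynomial Finset

section IdempotentAtoms

variable {σ k A : Type*} [Field k] [CommRing A] [Algebra k A] [Fintype σ] [DecidableEq σ]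

def idempotentAtom (e : σ → A) (s : Finset σ) : A :=
  (∏ i ∈ s, e i) * ∏ i ∈ sᶜ, (1 - e i)

variable {e : σ → A}

theorem sum_idempotentAtom (e : σ → A) : ∑ s, idempotentAtom e s = 1 := by
  simpa [idempotentAtom, compl_eq_univ_sdiff] using (prod_add e (fun i => 1 - e i) univ).symm

theorem mul_idempotentAtom {i : σ} (he : IsIdempotentElem (e i)) (s : Finset σ) :
    e i * idempotentAtom e s = if i ∈ s then idempotentAtom e s else 0 := by
  unfold idempotentAtom
  split_ifs with hi
  · rw [← mul_prod_erase s e hi, ← mul_assoc, ← mul_assoc, he.eq]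
  · rw [← mul_prod_erase sᶜ (fun j => 1 - e j) (mem_compl.2 hi), mul_left_comm,
      ← mul_assoc (e i), he.mul_one_sub_self, zero_mul, mul_zero]

theorem aeval_mul_idempotentAtom (he : ∀ i, IsIdempotentElem (e i)) (f : MvPolynomial σ k)
    (s : Finset σ) :
    aeval e f * idempotentAtom e s =
      eval (fun i => if i ∈ s then 1 else 0) f • idempotentAtom e s := by
  induction f using MvPolynomial.induction_on with
  | C a => simp [Algebra.smul_def]
  | add p q hp hq => simp only [map_add, add_mul, hp, hq, add_smul]
  | mul_X p i hp =>
    rw [map_mul, aeval_X, mul_assoc, mul_idempotentAtom (he i), map_mul, eval_X]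
    split_ifs <;> simp [hp]

theorem aeval_eq_zero_of_isNilpotent (he : ∀ i, IsIdempotentElem (e i)) {f : MvPolynomial σ k}
    (hf : IsNilpotent (aeval e f)) : aeval e f = 0 := by
  obtain ⟨n, hn⟩ := hf
  rw [← mul_one (aeval e f), ← sum_idempotentAtom e, mul_sum]
  refine sum_eq_zero fun s _ => ?_
  rw [aeval_mul_idempotentAtom he]
  have hpow : eval (fun i => if i ∈ s then 1 else 0) f ^ n • idempotentAtom e s = 0 := by
    rw [← map_pow, ← aeval_mul_idempotentAtom he, map_pow, hn, zero_mul]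
  rcases smul_eq_zero.1 hpow with hc | hs
  · rw [IsNilpotent.eq_zero ⟨n, hc⟩, zero_smul]
  · rw [hs, smul_zero]

end IdempotentAtoms

theorem isReduced_of_surjective_aeval {σ k A : Type*} [Fintype σ] [Field k] [CommRing A]
    [Algebra k A] {e : σ → A} (he : ∀ i, IsIdempotentElem (e i))
    (hsurj : Function.Surjective (aeval e : MvPolynomial σ k →ₐ[k] A)) : IsReduced A := by
  classical
  refine ⟨fun a ha => ?_⟩
  obtain ⟨f, rfl⟩ := hsurj a
  exact aeval_eq_zero_of_isNilpotent he ha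

theorem Ideal.isRadical_of_X_sq_sub_X_mem {σ k : Type*} [Fintype σ] [Field k]
    {I : Ideal (MvPolynomial σ k)} (h : ∀ i, X i ^ 2 - X i ∈ I) : I.IsRadical := by
  rw [Ideal.isRadical_iff_quotient_reduced]
  refine isReduced_of_surjective_aeval (k := k) (e := fun i => Ideal.Quotient.mk I (X i))
    (fun i => ?_) ?_
  · rw [IsIdempotentElem, ← map_mul, ← sub_eq_zero, ← map_sub, Ideal.Quotient.eq_zero_iff_mem,
      ← sq]
    exact h i
  · have : aeval (fun i => Ideal.Quotient.mk I (X i)) = Ideal.Quotient.mkₐ k I :=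
      algHom_ext fun i => by simp
    rw [this]
    exact Ideal.Quotient.mkₐ_surjective k I

/-- If I is an ideal of ℂ[z_1,...,z_K] containing z_i^2 - z_i
for every i, then I is a radical ideal. -/
theorem ideal_isRadical_of_idempotent_gens {K : ℕ}
    (I : Ideal (MvPolynomial (Fin K) ℂ))
    (h : ∀ i : Fin K, MvPolynomial.X i ^ 2 - MvPolynomial.X i ∈ I) :
    I.IsRadical :=
  Ideal.isRadical_of_X_sq_sub_X_mem h
end

section
/- A square-free binomial z^u − z^v with u, v ∈ {0,1}^K lies in the ideal Ĩ (the elimination ideal of I_L + I_T with respect to the t-variables) if and only if supp(E^t u) = supp(E^t v), where E is the adjacency matrix of the frame. -/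
/-!
Modulo `I_L + I_T` each `t_w` is idempotent and `z_w ≡ ∏_{E w w'} t_{w'}`, so a square-free
monomial `z^u` is congruent to the product of the idempotents `t_j` over the set of successors of
the worlds in `u`, which is `supp(Eᵗu)`. Hence equal supports give congruent monomials.
Conversely, any algebra map killing the ideal may be applied; sending `t_j` to the function that
vanishes exactly at `j` and is `1` elsewhere turns the product over a set `S` into the indicator
of the complement of `S`, so congruent monomials have equal supports.
-/

open MvPolynomial Finset

namespace Finset

section Idempotent

variable {ι M : Type*} [CommMonoid M] [DecidableEq ι] {e : ι → M}

theorem mul_prod_eq_prod_insert_of_isIdempotentElem (he : ∀ i, IsIdempotentElem (e i))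
    (a : ι) (s : Finset ι) : e a * ∏ i ∈ s, e i = ∏ i ∈ insert a s, e i := by
  by_cases ha : a ∈ s
  · rw [insert_eq_of_mem ha, ← mul_prod_erase s e ha, ← mul_assoc, (he a).eq]
  · rw [prod_insert ha]

theorem prod_mul_prod_eq_prod_union_of_isIdempotentElem (he : ∀ i, IsIdempotentElem (e i))
    (s t : Finset ι) : (∏ i ∈ s, e i) * ∏ i ∈ t, e i = ∏ i ∈ s ∪ t, e i := by
  induction s using Finset.induction_on with
  | empty => simp
  | insert a s ha ih =>
    rw [prod_insert ha, mul_assoc, ih, insert_union,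
      mul_prod_eq_prod_insert_of_isIdempotentElem he]

theorem prod_prod_eq_prod_biUnion_of_isIdempotentElem {κ : Type*}
    (he : ∀ i, IsIdempotentElem (e i)) (s : Finset κ) (t : κ → Finset ι) :
    ∏ k ∈ s, ∏ i ∈ t k, e i = ∏ i ∈ s.biUnion t, e i := by
  classical
  induction s using Finset.induction_on with
  | empty => simp
  | insert a s ha ih =>
    rw [prod_insert ha, ih, biUnion_insert, prod_mul_prod_eq_prod_union_of_isIdempotentElem he]

end Idempotent

theorem prod_mulSingle_zero_injective {ι M : Type*} [DecidableEq ι] [CommMonoidWithZero M]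
    [Nontrivial M] : Function.Injective fun s : Finset ι => ∏ i ∈ s, Pi.mulSingle i (0 : M) := by
  intro s t hst
  ext k
  have hk := congrFun hst k
  simp only [prod_apply, prod_pi_mulSingle] at hk
  by_cases hs : k ∈ s <;> by_cases ht : k ∈ t <;> simp_all

end Finset

namespace KripkeFrame

variable {K : ℕ} (R : Type*) [CommRing R] (E : Fin K → Fin K → Bool)

def successors (u : Fin K → Bool) : Finset (Fin K) :=
  (univ.filter fun i => u i).biUnion fun i => univ.filter fun j => E i j

/-- `I_L + I_T`, with `t_w = X (Sum.inl w)` and `z_w = X (Sum.inr w)`. -/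
noncomputable def frameIdeal : Ideal (MvPolynomial (Fin K ⊕ Fin K) R) :=
  Ideal.span (Set.range fun w : Fin K => X (Sum.inl w) ^ 2 - X (Sum.inl w)) +
  Ideal.span (Set.range fun w : Fin K =>
    X (Sum.inr w) - ∏ w' : Fin K, if E w w' then X (Sum.inl w') else 1)

variable {R E}

theorem coe_successors (u : Fin K → Bool) :
    (successors E u : Set (Fin K)) =
      {j | (∑ i : Fin K, (if E i j then 1 else 0) * (if u i then 1 else 0) : ℕ) ≠ 0} := by
  ext j
  simp [successors, sum_eq_zero_iff, and_comm]

theorem map_rename_monomial_eq_prod_successors {A : Type*} [CommRing A] [Algebra R A]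
    (f : MvPolynomial (Fin K ⊕ Fin K) R →ₐ[R] A) (hf : frameIdeal R E ≤ RingHom.ker f)
    (u : Fin K → Bool) :
    f (rename Sum.inr (∏ i, if u i then X i else 1)) =
      ∏ j ∈ successors E u, f (X (Sum.inl j)) := by
  have ht (j : Fin K) : IsIdempotentElem (f (X (Sum.inl j))) := by
    have hj := hf (Ideal.mem_sup_left (Ideal.subset_span ⟨j, rfl⟩))
    rwa [RingHom.mem_ker, map_sub, map_pow, sub_eq_zero, sq] at hj
  have hz (w : Fin K) :
      f (X (Sum.inr w)) = ∏ j ∈ univ.filter fun j => E w j, f (X (Sum.inl j)) := by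
    have hw := hf (Ideal.mem_sup_right (Ideal.subset_span ⟨w, rfl⟩))
    rw [RingHom.mem_ker, map_sub, sub_eq_zero, map_prod] at hw
    rw [hw, prod_filter]
    exact prod_congr rfl fun j _ => by split_ifs <;> simp
  rw [successors, ← prod_prod_eq_prod_biUnion_of_isIdempotentElem ht, ← prod_filter,
    map_prod, map_prod]
  exact prod_congr rfl fun i _ => by rw [rename_X, hz]

theorem frameIdeal_le_ker_aeval {A : Type*} [CommRing A] [Algebra R A] (p : Fin K → A)
    (hp : ∀ j, IsIdempotentElem (p j)) :
    frameIdeal R E ≤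
      RingHom.ker (aeval (Sum.elim p fun w => ∏ j ∈ univ.filter fun j => E w j, p j)) := by
  refine sup_le ?_ ?_ <;> rw [Ideal.span_le] <;> rintro _ ⟨w, rfl⟩
  · simp [sq, (hp w).eq]
  · simp only [SetLike.mem_coe, RingHom.mem_ker, map_sub, sub_eq_zero, map_prod, prod_filter,
      aeval_X, Sum.elim_inr]
    exact prod_congr rfl fun j _ => by split_ifs <;> simp

end KripkeFrame

open KripkeFrame

/-- A square-free binomial z^u − z^v, u, v ∈ {0,1}^K, lies in
the elimination ideal Ĩ = (I_L + I_T) ∩ ℂ[z] (realized via the injection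
rename Sum.inr : ℂ[z] → ℂ[t,z]) iff supp(Eᵗu) = supp(Eᵗv). -/
theorem binomial_mem_elimination_iff {K : ℕ} (E : Fin K → Fin K → Bool)
    (u v : Fin K → Bool) :
    ((∏ i : Fin K, if u i then (X i : MvPolynomial (Fin K) ℂ) else 1) -
     (∏ i : Fin K, if v i then (X i : MvPolynomial (Fin K) ℂ) else 1)) ∈
      Ideal.comap (rename (Sum.inr : Fin K → Fin K ⊕ Fin K) :
          MvPolynomial (Fin K) ℂ →ₐ[ℂ] MvPolynomial (Fin K ⊕ Fin K) ℂ)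
        (Ideal.span (Set.range (fun w : Fin K =>
            (X (Sum.inl w) : MvPolynomial (Fin K ⊕ Fin K) ℂ) ^ 2 - X (Sum.inl w))) +
         Ideal.span (Set.range (fun w : Fin K =>
            (X (Sum.inr w) : MvPolynomial (Fin K ⊕ Fin K) ℂ) -
              ∏ w' : Fin K, if E w w' then X (Sum.inl w') else 1)))
    ↔
    {j : Fin K | (∑ i : Fin K, (if E i j then 1 else 0) * (if u i then 1 else 0) : ℕ) ≠ 0} =
    {j : Fin K | (∑ i : Fin K, (if E i j then 1 else 0) * (if v i then 1 else 0) : ℕ) ≠ 0} := by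
  change _ ∈ (frameIdeal ℂ E).comap _ ↔ _
  rw [Ideal.mem_comap, ← coe_successors, ← coe_successors, Finset.coe_inj, map_sub]
  constructor
  · intro h
    have hidem (j : Fin K) : IsIdempotentElem (Pi.mulSingle j 0 : Fin K → ℂ) := by
      rw [IsIdempotentElem, ← Pi.mulSingle_mul, mul_zero]
    have hker := frameIdeal_le_ker_aeval (R := ℂ) (E := E) _ hidem
    have heval := RingHom.mem_ker.mp (hker h)
    rw [map_sub, sub_eq_zero, map_rename_monomial_eq_prod_successors _ hker,
      map_rename_monomial_eq_prod_successors _ hker] at heval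
    simp only [aeval_X, Sum.elim_inl] at heval
    exact prod_mulSingle_zero_injective heval
  · intro h
    have hker := (Ideal.Quotient.mkₐ_ker ℂ (frameIdeal ℂ E)).ge
    rw [← Ideal.Quotient.eq, ← Ideal.Quotient.mkₐ_eq_mk ℂ,
      map_rename_monomial_eq_prod_successors _ hker,
      map_rename_monomial_eq_prod_successors _ hker, h]
end

section
/- Every finite partitioning Kripke frame is tame: if any two neighborhoods N(w), N(w') are either disjoint or equal, then range(□) = V(⟨z_w^2 − z_w : w⟩ + Ĩ_T), where Ĩ_T is the toric ideal of the adjacency matrix. In particular, every b ∈ {0,1}^K with b(w_0) = b(w_1) whenever N(w_0) = N(w_1) ≠ ∅, and satisfying all binomial relations z^{α_+} = z^{α_−} for integer vectors α in the kernel of E^t, lies in the range of □. -/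
open MvPolynomial

lemma prod01 {K : ℕ} {c : Fin K → ℂ} (h : ∀ i, c i = 0 ∨ c i = 1) (n : Fin K → ℕ) :
    (∏ i : Fin K, c i ^ n i) = if ∃ i, c i = 0 ∧ n i ≠ 0 then 0 else 1 := by
  split_ifs with hx
  · obtain ⟨i, hci, hni⟩ := hx
    exact Finset.prod_eq_zero (Finset.mem_univ i) (by simp [hci, zero_pow hni])
  · push_neg at hx
    apply Finset.prod_eq_one
    intro i _
    rcases Nat.eq_zero_or_pos (n i) with h0 | h0
    · simp [h0]
    · rcases h i with h1 | h1
      · exact absurd (hx i h1) (by omega)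
      · simp [h1]

lemma signflip {K : ℕ} {E : Fin K → Fin K → Bool} {α : Fin K → ℤ}
    (hcol : ∀ j, (∑ i : Fin K, if E i j then α i else 0) = 0)
    {i j : Fin K} (hij : E i j = true) (hpos : 0 < α i) :
    ∃ i', E i' j = true ∧ α i' < 0 := by
  by_contra hc
  push_neg at hc
  have hpos' : 0 < ∑ i' : Fin K, if E i' j then α i' else 0 := by
    apply Finset.sum_pos'
    · intro i' _
      split_ifs with h
      · exact hc i' h
      · exact le_refl 0
    · exact ⟨i, Finset.mem_univ i, by simp [hij, hpos]⟩
  have := hcol j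
  omega

/-- Every finite partitioning Kripke frame is tame: if any two
neighborhoods are disjoint or equal, then the range of □ (viewed inside ℂ^K via
0,1 ∈ ℂ) equals the complex variety of the ideal
J = ⟨z_w^2 − z_w : w⟩ + Ĩ_T, where the toric ideal Ĩ_T is generated by the
binomials z^{α₊} − z^{α₋} for integer vectors α with Eᵗα = 0. -/
theorem partitioning_frame_is_tame {K : ℕ} (E : Fin K → Fin K → Bool)
    (N : Fin K → Finset (Fin K)) (hN : ∀ w w', w' ∈ N w ↔ E w w' = true)
    (hpart : ∀ w w', (N w ∩ N w').Nonempty → N w = N w') :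
    {b : Fin K → ℂ | ∃ a : Fin K → Bool,
        b = fun w => if (N w).inf a then 1 else 0} =
    {b : Fin K → ℂ | ∀ f ∈
        Ideal.span (Set.range (fun w : Fin K =>
            (X w : MvPolynomial (Fin K) ℂ) ^ 2 - X w)) +
        Ideal.span {f : MvPolynomial (Fin K) ℂ | ∃ α : Fin K → ℤ,
            (∀ j, (∑ i : Fin K, if E i j then α i else 0) = 0) ∧
            f = (∏ i : Fin K, X i ^ (α i).toNat) -
                ∏ i : Fin K, X i ^ (-α i).toNat},
        MvPolynomial.eval b f = 0} := by
  ext b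
  simp only [Set.mem_setOf_eq]
  constructor
  · rintro ⟨a, rfl⟩
    set B : Fin K → ℂ := fun w => if (N w).inf a then 1 else 0 with hB
    have hB01 : ∀ w, B w = 0 ∨ B w = 1 := by
      intro w; by_cases h : (N w).inf a = true <;> simp [hB, h]
    have hB0 : ∀ w, B w = 0 ↔ ∃ j, E w j = true ∧ a j = false := by
      intro w
      have hinf : (N w).inf a = true ↔ ∀ j ∈ N w, a j = true := by
        rw [← top_eq_true, Finset.inf_eq_top_iff]
      constructor
      · intro h
        have : ¬ ((N w).inf a = true) := by
          intro hh; simp [hB, hh] at h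
        rw [hinf] at this
        push_neg at this
        obtain ⟨j, hj1, hj2⟩ := this
        exact ⟨j, (hN w j).mp hj1, by simpa using hj2⟩
      · rintro ⟨j, hj1, hj2⟩
        have : ¬ ((N w).inf a = true) := by
          rw [hinf]
          intro hh
          have := hh j ((hN w j).mpr hj1)
          simp [this] at hj2
        simp [hB, this]
    intro f hf
    have hker : Ideal.span (Set.range (fun w : Fin K =>
            (X w : MvPolynomial (Fin K) ℂ) ^ 2 - X w)) +
        Ideal.span {f : MvPolynomial (Fin K) ℂ | ∃ α : Fin K → ℤ,
            (∀ j, (∑ i : Fin K, if E i j then α i else 0) = 0) ∧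
            f = (∏ i : Fin K, X i ^ (α i).toNat) -
                ∏ i : Fin K, X i ^ (-α i).toNat} ≤
        RingHom.ker (MvPolynomial.eval B) := by
      rw [Ideal.add_eq_sup, sup_le_iff]
      constructor <;> rw [Ideal.span_le]
      · rintro _ ⟨w, rfl⟩
        simp only [SetLike.mem_coe, RingHom.mem_ker, map_sub, map_pow, eval_X]
        rcases hB01 w with h | h <;> rw [h] <;> ring
      · rintro _ ⟨α, hcol, rfl⟩
        simp only [SetLike.mem_coe, RingHom.mem_ker, map_sub, map_prod, map_pow, eval_X]
        rw [prod01 hB01, prod01 hB01, sub_eq_zero]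
        congr 1
        rw [eq_iff_iff]
        constructor
        · rintro ⟨i, hbi, hni⟩
          obtain ⟨j, hij, haj⟩ := (hB0 i).mp hbi
          obtain ⟨i', hi'j, hi'neg⟩ := signflip hcol hij (by omega)
          exact ⟨i', (hB0 i').mpr ⟨j, hi'j, haj⟩, by omega⟩
        · rintro ⟨i, hbi, hni⟩
          obtain ⟨j, hij, haj⟩ := (hB0 i).mp hbi
          have hcol' : ∀ j, (∑ i : Fin K, if E i j then -α i else 0) = 0 := by
            intro j
            have := hcol j
            rw [← neg_eq_zero, ← Finset.sum_neg_distrib] at this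
            convert this using 2 with i
            split <;> simp
          obtain ⟨i', hi'j, hi'neg⟩ := signflip hcol' hij (by omega)
          exact ⟨i', (hB0 i').mpr ⟨j, hi'j, haj⟩, by omega⟩
    exact hker hf
  · intro hvar
    have key : ∀ α : Fin K → ℤ, (∀ j, (∑ i : Fin K, if E i j then α i else 0) = 0) →
        (∏ i : Fin K, b i ^ (α i).toNat) = ∏ i : Fin K, b i ^ (-α i).toNat := by
      intro α hcol
      have hf := hvar _ (by
        rw [Ideal.add_eq_sup]
        exact Submodule.mem_sup_right (Ideal.subset_span ⟨α, hcol, rfl⟩))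
      simpa [sub_eq_zero] using hf
    have h01 : ∀ w, b w = 0 ∨ b w = 1 := by
      intro w
      have hf := hvar _ (by
        rw [Ideal.add_eq_sup]
        exact Submodule.mem_sup_left (Ideal.subset_span ⟨w, rfl⟩))
      simp only [map_sub, map_pow, eval_X] at hf
      have : b w * (b w - 1) = 0 := by linear_combination hf
      rcases mul_eq_zero.mp this with h | h
      · exact Or.inl h
      · exact Or.inr (sub_eq_zero.mp h)
    have hprodone : ∀ u : Fin K, (∏ i : Fin K, b i ^ (if i = u then 1 else 0)) = b u := by
      intro u
      simp only [pow_ite, pow_one, pow_zero]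
      simp [Finset.prod_ite_eq']
    have hempty : ∀ w, N w = ∅ → b w = 1 := by
      intro w hw
      have hEw : ∀ j, E w j = false := by
        intro j
        cases h : E w j
        · rfl
        · have := (hN w j).mpr h
          simp [hw] at this
      have hk := key (fun i => if i = w then 1 else 0) ?_
      swap
      · intro j
        have hsplit : ∀ i : Fin K, (if E i j then (if i = w then (1:ℤ) else 0) else 0)
            = if i = w then (if E i j then (1:ℤ) else 0) else 0 := by
          intro i
          split_ifs <;> rfl
        simp [hsplit, Finset.sum_ite_eq', hEw j]
      have e1 : ∀ i : Fin K, ((if i = w then (1:ℤ) else 0)).toNat = if i = w then 1 else 0 := by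
        intro i; split_ifs <;> rfl
      have e2 : ∀ i : Fin K, (-(if i = w then (1:ℤ) else 0)).toNat = 0 := by
        intro i; split_ifs <;> rfl
      simp only [e1, e2, pow_zero, Finset.prod_const_one, hprodone] at hk
      exact hk
    have heq : ∀ w w', N w = N w' → b w = b w' := by
      intro w w' hww'
      by_cases hww : w = w'
      · rw [hww]
      have hE : ∀ j, E w j = E w' j := by
        intro j
        have h1 := hN w j
        have h2 := hN w' j
        rw [hww'] at h1
        cases hEw : E w j <;> cases hEw' : E w' j <;> simp_all
      have hk := key (fun i => (if i = w then 1 else 0) - (if i = w' then 1 else 0)) ?_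
      swap
      · intro j
        have hsplit : ∀ i : Fin K,
            (if E i j then ((if i = w then (1:ℤ) else 0) - (if i = w' then 1 else 0)) else 0)
            = (if i = w then (if E i j then (1:ℤ) else 0) else 0)
              - (if i = w' then (if E i j then (1:ℤ) else 0) else 0) := by
          intro i
          split_ifs <;> simp
        simp only [hsplit]
        rw [Finset.sum_sub_distrib]
        simp [Finset.sum_ite_eq', hE j]
      have e1 : ∀ i : Fin K,
          ((if i = w then (1:ℤ) else 0) - (if i = w' then 1 else 0)).toNat
          = if i = w then 1 else 0 := by
        intro i
        by_cases h1 : i = w <;> by_cases h2 : i = w'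
        · exact absurd (h1.symm.trans h2) hww
        all_goals simp [h1, h2, hww, Ne.symm hww]
      have e2 : ∀ i : Fin K,
          (-((if i = w then (1:ℤ) else 0) - (if i = w' then 1 else 0))).toNat
          = if i = w' then 1 else 0 := by
        intro i
        by_cases h1 : i = w <;> by_cases h2 : i = w'
        · exact absurd (h1.symm.trans h2) hww
        all_goals simp [h1, h2, hww, Ne.symm hww]
      simp only [e1, e2, hprodone] at hk
      exact hk
    refine ⟨fun j => decide (∀ w, j ∈ N w → b w = 1), ?_⟩
    funext w
    rcases h01 w with h0 | h1
    · rw [h0]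
      have hne : N w ≠ ∅ := by
        intro h
        rw [hempty w h] at h0
        norm_num at h0
      obtain ⟨j, hj⟩ := Finset.nonempty_iff_ne_empty.mpr hne
      have haj : decide (∀ w', j ∈ N w' → b w' = 1) = false := by
        apply decide_eq_false
        intro hall
        rw [hall w hj] at h0
        norm_num at h0
      have hinf : ¬ ((N w).inf (fun j => decide (∀ w, j ∈ N w → b w = 1)) = true) := by
        rw [← top_eq_true, Finset.inf_eq_top_iff]
        intro hall
        have := hall j hj
        rw [top_eq_true] at this
        simp only [haj] at this
        exact Bool.false_ne_true this
      simp [hinf]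
    · rw [h1]
      have hinf : (N w).inf (fun j => decide (∀ w, j ∈ N w → b w = 1)) = true := by
        rw [← top_eq_true, Finset.inf_eq_top_iff]
        intro j hj
        rw [top_eq_true, decide_eq_true_eq]
        intro w' hj'
        have hNN : N w' = N w := hpart w' w ⟨j, Finset.mem_inter.mpr ⟨hj', hj⟩⟩
        rw [heq w' w hNN, h1]
      simp [hinf]
end
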